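/- Let G₁ and G₂ be graphs with G₂ not complete. Then thin(G₁ • G₂) ≥ ω(G₁)·thin(G₂), where • denotes the lexicographical product. -/

import Mathlib

open SimpleGraph

/-- An ordering (given by an injective rank function `f`) and a partition (given by a
coloring `c`) are consistent: for `r < s < t`, if `r, s` are in the same class and
`t` is adjacent to `r`, then `t` is adjacent to `s`. -/
def Consistent {V : Type*} (G : SimpleGraph V) (f : V → ℕ) (c : V → ℕ) : Prop :=
  ∀ r s t : V, f r < f s → f s < f t → c r = c s → G.Adj t r → G.Adj t s

/-- Strong consistency: consistency with the ordering and with its reverse. -/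
def StronglyConsistent {V : Type*} (G : SimpleGraph V) (f : V → ℕ) (c : V → ℕ) : Prop :=
  Consistent G f c ∧
    ∀ r s t : V, f r < f s → f s < f t → c s = c t → G.Adj t r → G.Adj s r

/-- The thinness of a graph. -/
noncomputable def thin {V : Type*} (G : SimpleGraph V) : ℕ :=
  sInf {k | ∃ f c : V → ℕ, Function.Injective f ∧ (∀ v, c v < k) ∧ Consistent G f c}

/-- The proper thinness of a graph. -/
noncomputable def pthin {V : Type*} (G : SimpleGraph V) : ℕ :=
  sInf {k | ∃ f c : V → ℕ, Function.Injective f ∧ (∀ v, c v < k) ∧ StronglyConsistent G f c}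

/-- Independent thinness: classes must be independent sets. -/
noncomputable def indthin {V : Type*} (G : SimpleGraph V) : ℕ :=
  sInf {k | ∃ f c : V → ℕ, Function.Injective f ∧ (∀ v, c v < k) ∧ Consistent G f c ∧
    ∀ u v : V, c u = c v → ¬ G.Adj u v}

/-- Independent proper thinness. -/
noncomputable def indpthin {V : Type*} (G : SimpleGraph V) : ℕ :=
  sInf {k | ∃ f c : V → ℕ, Function.Injective f ∧ (∀ v, c v < k) ∧ StronglyConsistent G f c ∧
    ∀ u v : V, c u = c v → ¬ G.Adj u v}

/-- Complete thinness: classes must be cliques. -/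
noncomputable def compthin {V : Type*} (G : SimpleGraph V) : ℕ :=
  sInf {k | ∃ f c : V → ℕ, Function.Injective f ∧ (∀ v, c v < k) ∧ Consistent G f c ∧
    ∀ u v : V, u ≠ v → c u = c v → G.Adj u v}

/-- Complete proper thinness. -/
noncomputable def comppthin {V : Type*} (G : SimpleGraph V) : ℕ :=
  sInf {k | ∃ f c : V → ℕ, Function.Injective f ∧ (∀ v, c v < k) ∧ StronglyConsistent G f c ∧
    ∀ u v : V, u ≠ v → c u = c v → G.Adj u v}

/-- The incompatibility graph `G_<` of a graph and an ordering: for `v < w`,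
`vw` is an edge iff there is `z > w` adjacent to `v` but not to `w`. -/
def incompat {V : Type*} (G : SimpleGraph V) (f : V → ℕ) : SimpleGraph V where
  Adj v w :=
    (f v < f w ∧ ∃ z, f w < f z ∧ G.Adj z v ∧ ¬ G.Adj z w) ∨
    (f w < f v ∧ ∃ z, f v < f z ∧ G.Adj z w ∧ ¬ G.Adj z v)
  symm := ⟨fun v w h => h.symm⟩
  loopless := ⟨fun v h => by rcases h with ⟨h, _⟩ | ⟨h, _⟩ <;> exact lt_irrefl _ h⟩

/-- The join of two graphs. -/
def joinG {V₁ V₂ : Type*} (G₁ : SimpleGraph V₁) (G₂ : SimpleGraph V₂) :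
    SimpleGraph (V₁ ⊕ V₂) where
  Adj x y := match x, y with
    | Sum.inl u, Sum.inl v => G₁.Adj u v
    | Sum.inr u, Sum.inr v => G₂.Adj u v
    | Sum.inl _, Sum.inr _ => True
    | Sum.inr _, Sum.inl _ => True
  symm := by refine ⟨?_⟩ <;> rintro (u | u) (v | v) h
             · exact G₁.adj_symm h
             · trivial
             · trivial
             · exact G₂.adj_symm h
  loopless := by refine ⟨?_⟩ <;> rintro (u | u) h
                 · exact G₁.loopless.irrefl u h
                 · exact G₂.loopless.irrefl u h

/-- A graph is complete iff all pairs of distinct vertices are adjacent. -/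
def IsCompleteGraph {V : Type*} (G : SimpleGraph V) : Prop :=
  ∀ u v : V, u ≠ v → G.Adj u v

/-- The clique number of a graph. -/
noncomputable def omegaNum {V : Type*} (G : SimpleGraph V) : ℕ :=
  sSup {n | ∃ s : Finset V, s.card = n ∧ ∀ u ∈ s, ∀ v ∈ s, u ≠ v → G.Adj u v}

/-- The independence number of a graph. -/
noncomputable def alphaNum {V : Type*} (G : SimpleGraph V) : ℕ :=
  sSup {n | ∃ s : Finset V, s.card = n ∧ ∀ u ∈ s, ∀ v ∈ s, u ≠ v → ¬ G.Adj u v}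


/-- The lexicographical product of two graphs. -/
def lexProd {V₁ V₂ : Type*} (G₁ : SimpleGraph V₁) (G₂ : SimpleGraph V₂) :
    SimpleGraph (V₁ × V₂) where
  Adj x y := G₁.Adj x.1 y.1 ∨ (x.1 = y.1 ∧ G₂.Adj x.2 y.2)
  symm := by refine ⟨?_⟩ <;> rintro x y (h | ⟨h1, h2⟩)
             · exact Or.inl h.symm
             · exact Or.inr ⟨h1.symm, h2.symm⟩
  loopless := by refine ⟨?_⟩ <;> rintro x (h | ⟨_, h⟩)
                 · exact G₁.loopless.irrefl _ h
                 · exact G₂.loopless.irrefl _ h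

/-!
Fix a maximum clique `s` of `G₁` and an optimal consistent representation of `G₁ • G₂`. Give each
class to the copy of `G₂` over `s` containing its earliest vertex over `s`; different copies get
disjoint sets of classes. In the copy over `u ∈ s`, a vertex whose class belongs to another copy
has an earlier classmate adjacent to the whole copy, so by consistency it is adjacent to every later
vertex of the copy. Moving these vertices to the end of the order and merging them into one owned
class (there is one, since `G₂` is not complete) gives a representation of `G₂` that uses only the
classes owned by `u`.
-/

@[simp]
lemma lexProd_adj {V₁ V₂ : Type*} {G₁ : SimpleGraph V₁} {G₂ : SimpleGraph V₂} {x y : V₁ × V₂} :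
    (lexProd G₁ G₂).Adj x y ↔ G₁.Adj x.1 y.1 ∨ (x.1 = y.1 ∧ G₂.Adj x.2 y.2) :=
  Iff.rfl

def lexProdFiber {V₁ V₂ : Type*} (G₁ : SimpleGraph V₁) (G₂ : SimpleGraph V₂) (u : V₁) :
    G₂ ↪g lexProd G₁ G₂ where
  toFun x := (u, x)
  inj' := Prod.mk_right_injective u
  map_rel_iff' := by simp

section Thinness

variable {V : Type*} {G : SimpleGraph V} {f c : V → ℕ}

lemma Consistent.comap {W : Type*} {H : SimpleGraph W} (e : H ↪g G) (h : Consistent G f c) :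
    Consistent H (f ∘ e) (c ∘ e) :=
  fun r s t hrs hst hc htr => e.map_adj_iff.1 (h (e r) (e s) (e t) hrs hst hc (e.map_adj_iff.2 htr))

lemma thin_le_of_consistent {k : ℕ} (hf : Function.Injective f) (hk : ∀ v, c v < k)
    (h : Consistent G f c) : thin G ≤ k :=
  Nat.sInf_le ⟨f, c, hf, hk, h⟩

lemma thin_le_card_of_consistent {C : Finset ℕ} (hf : Function.Injective f) (hC : ∀ v, c v ∈ C)
    (h : Consistent G f c) : thin G ≤ C.card := by
  refine thin_le_of_consistent (c := fun v => C.equivFin ⟨c v, hC v⟩) hf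
    (fun v => (C.equivFin _).isLt) fun r s t hrs hst hc htr => h r s t hrs hst ?_ htr
  simpa using C.equivFin.injective (Fin.val_injective hc)

lemma exists_consistent_of_thin [Finite V] (G : SimpleGraph V) :
    ∃ f c : V → ℕ, Function.Injective f ∧ (∀ v, c v < thin G) ∧ Consistent G f c := by
  obtain ⟨n, ⟨e⟩⟩ := Finite.exists_equiv_fin V
  have hf : Function.Injective fun v => (e v : ℕ) := Fin.val_injective.comp e.injective
  -- every vertex in a class of its own
  exact Nat.sInf_mem (s := {k | ∃ f c : V → ℕ, Function.Injective f ∧ (∀ v, c v < k) ∧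
    Consistent G f c}) ⟨n, _, _, hf, fun v => (e v).isLt,
    fun r s _ hrs _ hc _ => absurd (hf hc ▸ hrs) (lt_irrefl _)⟩

lemma thin_le_card_of_consistent_of_forall_adj_later [Finite V] (hG : ¬ IsCompleteGraph G)
    (hf : Function.Injective f) (h : Consistent G f c) {D : Set V}
    (hD : ∀ x ∈ D, ∀ z, f x < f z → G.Adj z x) {C : Finset ℕ} (hC : ∀ x ∉ D, c x ∈ C) :
    thin G ≤ C.card := by
  classical
  obtain ⟨x₀, hx₀⟩ : ∃ x₀, x₀ ∉ D := by
    by_contra! hall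
    refine hG fun u v huv => ?_
    rcases lt_or_gt_of_ne (hf.ne huv) with hlt | hlt
    · exact (hD u (hall u) v hlt).symm
    · exact hD v (hall v) u hlt
  obtain ⟨B, hB⟩ := (Set.finite_range f).bddAbove
  have hfB : ∀ x, f x ≤ B := fun x => hB ⟨x, rfl⟩
  -- `D` moves behind all other vertices and joins the class of `x₀`
  set f' : V → ℕ := fun x => (if x ∈ D then B + 1 else 0) + f x
  set c' : V → ℕ := fun x => if x ∈ D then c x₀ else c x
  have hf' : Function.Injective f' := by
    intro x y hxy
    have := hfB x
    have := hfB y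
    by_cases hx : x ∈ D <;> by_cases hy : y ∈ D <;> simp only [f', hx, hy, if_true, if_false] at hxy
      <;> first | omega | exact hf (by omega)
  refine thin_le_card_of_consistent (c := c') hf' (fun x => ?_) fun r s t hrs hst hc htr => ?_
  · by_cases hx : x ∈ D <;> simp [c', hx, hC, hx₀]
  have := hfB r
  have := hfB s
  have := hfB t
  have hst_ne : s ≠ t := by rintro rfl; exact lt_irrefl _ hst
  rcases lt_or_gt_of_ne (hf.ne hst_ne) with hst₀ | hts₀
  · by_cases hs : s ∈ D
    · exact hD s hs t hst₀
    have hr : r ∉ D := fun hr => by simp only [f', hr, hs, if_true, if_false] at hrs; omega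
    exact h r s t (by simpa [f', hr, hs] using hrs) hst₀ (by simpa [c', hr, hs] using hc) htr
  · have ht : t ∈ D := by
      by_contra ht
      by_cases hs : s ∈ D <;> simp only [f', ht, hs, if_true, if_false] at hst <;> omega
    exact (hD t ht s hts₀).symm

end Thinness

lemma exists_isNClique_omegaNum {V : Type*} [Fintype V] (G : SimpleGraph V) :
    ∃ s : Finset V, G.IsNClique (omegaNum G) s := by
  obtain ⟨s, hcard, hs⟩ : omegaNum G ∈
      {n | ∃ s : Finset V, s.card = n ∧ ∀ u ∈ s, ∀ v ∈ s, u ≠ v → G.Adj u v} :=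
    Nat.sSup_mem ⟨0, ∅, rfl, by simp⟩
      ⟨Fintype.card V, fun _ ⟨t, ht, _⟩ => ht ▸ t.card_le_univ⟩
  exact ⟨s, ⟨fun u hu v hv => hs u hu v hv, hcard⟩⟩

section FirstInClass

variable {V : Type*} {f c : V → ℕ} {S : Set V} {w w' : V}

def IsFirstInClass (f c : V → ℕ) (S : Set V) (w : V) : Prop :=
  w ∈ S ∧ ∀ w' ∈ S, c w' = c w → f w ≤ f w'

lemma IsFirstInClass.eq_of_color_eq (hf : Function.Injective f) (hw : IsFirstInClass f c S w)
    (hw' : IsFirstInClass f c S w') (h : c w = c w') : w = w' :=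
  hf (le_antisymm (hw.2 w' hw'.1 h.symm) (hw'.2 w hw.1 h))

lemma exists_isFirstInClass [Finite V] {v : V} (hv : v ∈ S) :
    ∃ w, IsFirstInClass f c S w ∧ c w = c v ∧ f w ≤ f v := by
  obtain ⟨w, ⟨hwS, hwc⟩, hmin⟩ :=
    Set.exists_min_image {w | w ∈ S ∧ c w = c v} f (Set.toFinite _) ⟨v, hv, rfl⟩
  exact ⟨w, ⟨hwS, fun w' hw'S hw'c => hmin w' ⟨hw'S, hw'c.trans hwc⟩⟩, hwc, hmin v ⟨hv, rfl⟩⟩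

end FirstInClass

section OwnedClasses

variable {V₁ V₂ : Type*} [Fintype V₁] [Fintype V₂] {G₁ : SimpleGraph V₁} {G₂ : SimpleGraph V₂}
  {f c : V₁ × V₂ → ℕ} {s : Finset V₁} {u : V₁}

noncomputable def ownedClasses (f c : V₁ × V₂ → ℕ) (s : Finset V₁) (u : V₁) : Finset ℕ := by
  classical
  exact ({w | w.1 = u ∧ IsFirstInClass f c (Prod.fst ⁻¹' s) w} : Finset (V₁ × V₂)).image c

lemma mem_ownedClasses {j : ℕ} : j ∈ ownedClasses f c s u ↔
    ∃ w, (w.1 = u ∧ IsFirstInClass f c (Prod.fst ⁻¹' s) w) ∧ c w = j := by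
  simp [ownedClasses]

lemma sum_card_ownedClasses_le {k : ℕ} (hf : Function.Injective f) (hk : ∀ w, c w < k) :
    ∑ u ∈ s, (ownedClasses f c s u).card ≤ k := by
  classical
  have hdisj : (s : Set V₁).PairwiseDisjoint (ownedClasses f c s) := by
    intro u _ v _ huv
    refine Finset.disjoint_left.2 fun j hju hjv => huv ?_
    obtain ⟨w, ⟨rfl, hw⟩, rfl⟩ := mem_ownedClasses.1 hju
    obtain ⟨w', ⟨rfl, hw'⟩, hc⟩ := mem_ownedClasses.1 hjv
    rw [hw.eq_of_color_eq hf hw' hc.symm]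
  calc ∑ u ∈ s, (ownedClasses f c s u).card = (s.biUnion (ownedClasses f c s)).card :=
        (Finset.card_biUnion hdisj).symm
    _ ≤ (Finset.range k).card := Finset.card_le_card fun j hj => by
        obtain ⟨u, -, hj⟩ := Finset.mem_biUnion.1 hj
        obtain ⟨w, -, rfl⟩ := mem_ownedClasses.1 hj
        exact Finset.mem_range.2 (hk w)
    _ = k := Finset.card_range k

lemma adj_of_not_mem_ownedClasses (hs : G₁.IsClique s) (hf : Function.Injective f)
    (h : Consistent (lexProd G₁ G₂) f c) (hu : u ∈ s) {x z : V₂}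
    (hx : c (u, x) ∉ ownedClasses f c s u) (hxz : f (u, x) < f (u, z)) : G₂.Adj z x := by
  obtain ⟨w, hw, hwc, hwf⟩ :=
    exists_isFirstInClass (f := f) (c := c) (S := Prod.fst ⁻¹' s) (v := (u, x)) hu
  have hwu : w.1 ≠ u := fun hwu => hx (mem_ownedClasses.2 ⟨w, ⟨hwu, hw⟩, hwc⟩)
  have hwx : f w < f (u, x) := hwf.lt_of_ne fun he => hwu (congrArg Prod.fst (hf he))
  have hzw : (lexProd G₁ G₂).Adj (u, z) w := Or.inl (hs hu hw.1 hwu.symm)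
  simpa using h w (u, x) (u, z) hwx hxz hwc hzw

lemma thin_le_card_ownedClasses (hG₂ : ¬ IsCompleteGraph G₂) (hs : G₁.IsClique s)
    (hf : Function.Injective f) (h : Consistent (lexProd G₁ G₂) f c) (hu : u ∈ s) :
    thin G₂ ≤ (ownedClasses f c s u).card :=
  thin_le_card_of_consistent_of_forall_adj_later hG₂
    (hf.comp (lexProdFiber G₁ G₂ u).injective) (h.comap (lexProdFiber G₁ G₂ u))
    (D := {x | c (u, x) ∉ ownedClasses f c s u})
    (fun _ hx _ hxz => adj_of_not_mem_ownedClasses hs hf h hu hx hxz) fun _ hx => not_not.1 hx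

end OwnedClasses

/-- If `G₂` is not complete, then `thin (G₁ • G₂) ≥ ω(G₁) · thin G₂`. -/
theorem thin_lexProd_ge {V₁ V₂ : Type*} [Fintype V₁] [Fintype V₂]
    (G₁ : SimpleGraph V₁) (G₂ : SimpleGraph V₂) (h : ¬ IsCompleteGraph G₂) :
    omegaNum G₁ * thin G₂ ≤ thin (lexProd G₁ G₂) := by
  obtain ⟨s, hs⟩ := exists_isNClique_omegaNum G₁
  obtain ⟨f, c, hf, hck, hc⟩ := exists_consistent_of_thin (lexProd G₁ G₂)
  calc omegaNum G₁ * thin G₂ = ∑ _u ∈ s, thin G₂ := by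
        rw [Finset.sum_const, smul_eq_mul, hs.card_eq]
    _ ≤ ∑ u ∈ s, (ownedClasses f c s u).card :=
        Finset.sum_le_sum fun _ hu => thin_le_card_ownedClasses h hs.isClique hf hc hu
    _ ≤ thin (lexProd G₁ G₂) := sum_card_ownedClasses_le hf hck
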